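/- arXiv:1807.01819 — 2 statements merged into one kernel-verified Lean document; each statement's English description precedes it below -/
import Mathlib

section
/- Let p ∈ C be continuous and let u0 ∈ C. Define the renewal density α(τ) = Σ_{i≥0} (u0 * p^{*(i)})(τ), where p^{*(i)} denotes i-fold self-convolution with the convention (u0 * p^{*(0)}) := u0. Then the function u(x,τ) = u0(x+τ) + ∫_0^τ p(x+τ−s) α(s) ds is a strong solution of the Kolmogorov forward equation for residual times: u is C¹ on [0,∞)×[0,∞), u(x,0) = u0(x), and ∂_τ u(x,τ) − ∂_x u(x,τ) = p(x) u(0,τ) for all x, τ ≥ 0. -/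
open MeasureTheory Set Filter Topology

/-- The class `𝒞` of positive, `C¹`, integrable probability densities on
`ℝ₊ = [0,∞)` vanishing at infinity. -/
def MemC (f : ℝ → ℝ) : Prop :=
  ContDiffOn ℝ 1 f (Set.Ici 0) ∧ MeasureTheory.IntegrableOn f (Set.Ici 0) ∧
    (∀ x ∈ Set.Ici (0 : ℝ), 0 < f x) ∧ (∫ x in Set.Ici (0 : ℝ), f x) = 1 ∧
    Filter.Tendsto f Filter.atTop (nhds 0)

/-- `renewalTerm p u0 i = u0 * p^{*(i)}`, the `i`-fold convolution of the
holding time density `p` with the initial density `u0` (convention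
`u0 * p^{*(0)} = u0`), where `(f * g)(τ) = ∫_0^τ f(τ-s) g(s) ds`. -/
noncomputable def renewalTerm (p u0 : ℝ → ℝ) : ℕ → ℝ → ℝ
  | 0 => u0
  | (i + 1) => fun τ => ∫ s in (0 : ℝ)..τ, p (τ - s) * renewalTerm p u0 i s

/-- The renewal density `α(τ) = Σ_{i≥0} (u0 * p^{*(i)})(τ)`. -/
noncomputable def renewalDensity (p u0 : ℝ → ℝ) (τ : ℝ) : ℝ :=
  ∑' i : ℕ, renewalTerm p u0 i τ

/-- A strong solution of the Kolmogorov forward equation for residual times: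
`u ∈ C¹(ℝ₊ × ℝ₊; ℝ₊)`, `u(·,0) ∈ 𝒞`, and
`∂_τ u(x,τ) − ∂_x u(x,τ) = p(x) u(0,τ)` for all `x, τ ≥ 0`. -/
def IsStrongSolution (p : ℝ → ℝ) (u : ℝ → ℝ → ℝ) : Prop :=
  ContDiffOn ℝ 1 (fun z : ℝ × ℝ => u z.1 z.2) (Set.Ici 0 ×ˢ Set.Ici 0) ∧
  (∀ x ∈ Set.Ici (0 : ℝ), ∀ τ ∈ Set.Ici (0 : ℝ), 0 ≤ u x τ) ∧
  MemC (fun x => u x 0) ∧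
  (∀ x ∈ Set.Ici (0 : ℝ), ∀ τ ∈ Set.Ici (0 : ℝ),
    derivWithin (fun t => u x t) (Set.Ici 0) τ
      - derivWithin (fun y => u y τ) (Set.Ici 0) x = p x * u 0 τ)

/-!
On `[0, T]` the `i`-th renewal term is bounded by `B (M τ)^i / i!`, where `M` and `B` bound `p`
and `u0` there, so the renewal series converges locally uniformly and its sum `α` is continuous
and solves the renewal equation `α = u0 + p ⋆ α`. After extending `p` and `u0` to `C¹` functions
on `ℝ`, `u` is the Duhamel solution of the transport equation `∂_τ u − ∂_x u = p(x) α(τ)` with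
initial data `u0`, which is `C¹` because one may differentiate under the integral sign.
Finally `u(0,τ) = α(τ)` is exactly the renewal equation.
-/

theorem MemC.nonneg {f : ℝ → ℝ} (hf : MemC f) : ∀ x ∈ Ici 0, 0 ≤ f x :=
  fun x hx => (hf.2.2.1 x hx).le

theorem ContDiffOn.exists_contDiff_eqOn_Ici {f : ℝ → ℝ} {a : ℝ} (hf : ContDiffOn ℝ 1 f (Ici a)) :
    ∃ F : ℝ → ℝ, ContDiff ℝ 1 F ∧ EqOn F f (Ici a) := by
  set d : ℝ → ℝ := fun x => derivWithin f (Ici a) (max x a)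
  have hd : Continuous d :=
    (hf.continuousOn_derivWithin (uniqueDiffOn_Ici a) le_rfl).comp_continuous (by fun_prop)
      fun x => le_max_right x a
  have hF (x : ℝ) : HasDerivAt (fun x => f a + ∫ t in a..x, d t) (d x) x :=
    ((hd.integral_hasStrictDerivAt a x).hasDerivAt).const_add (f a)
  refine ⟨fun x => f a + ∫ t in a..x, d t, contDiff_one_iff_deriv.2
    ⟨fun x => (hF x).differentiableAt, by
      convert hd using 1; exact funext fun x => (hF x).deriv⟩, fun x hx => ?_⟩
  have hf' (t : ℝ) (ht : t ∈ Ioo a x) : HasDerivAt f (d t) t := by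
    rw [show d t = derivWithin f (Ici a) t by simp [d, max_eq_left ht.1.le]]
    exact ((hf.differentiableOn one_ne_zero t (mem_Ici.2 ht.1.le)).hasDerivWithinAt).hasDerivAt
      (Ici_mem_nhds ht.1)
  simp only [intervalIntegral.integral_eq_sub_of_hasDerivAt_of_le hx
    (hf.continuousOn.mono Icc_subset_Ici_self) hf' (hd.intervalIntegrable a x), add_sub_cancel]

theorem HasDerivAt.derivWithin_Ici_of_eqOn {f F : ℝ → ℝ} {F' a x : ℝ} (hF : HasDerivAt F F' x)
    (hfF : EqOn f F (Ici a)) (hx : x ∈ Ici a) : derivWithin f (Ici a) x = F' :=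
  (hF.hasDerivWithinAt.congr hfF (hfF hx)).derivWithin (uniqueDiffOn_Ici a x hx)

section Convolution

variable {g h : ℝ → ℝ}

theorem continuous_integral_comp_sub_mul (hg : Continuous g) (hh : Continuous h) (a : ℝ) :
    Continuous fun z : ℝ × ℝ => ∫ s in a..z.2, g (z.1 - s) * h s :=
  intervalIntegral.continuous_parametric_primitive_of_continuous
    (f := fun (y : ℝ) s => g (y - s) * h s) (by fun_prop)

theorem hasDerivAt_integral_comp_sub_mul (hg : ContDiff ℝ 1 g) (hh : Continuous h)
    (a b y₀ : ℝ) :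
    HasDerivAt (fun y => ∫ s in a..b, g (y - s) * h s)
      (∫ s in a..b, deriv g (y₀ - s) * h s) y₀ := by
  have hgc := hg.continuous
  have hg' : Continuous (deriv g) := hg.continuous_deriv le_rfl
  obtain ⟨C, hC⟩ := ((isCompact_closedBall y₀ 1).prod isCompact_uIcc).exists_bound_of_continuousOn
    (f := fun z : ℝ × ℝ => deriv g (z.1 - z.2) * h z.2) (by fun_prop)
  refine (intervalIntegral.hasDerivAt_integral_of_dominated_loc_of_deriv_le (bound := fun _ => C)
    (F := fun y s => g (y - s) * h s) (F' := fun y s => deriv g (y - s) * h s)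
    (Metric.closedBall_mem_nhds y₀ one_pos) ?_
    ((by fun_prop : Continuous fun s => g (y₀ - s) * h s).intervalIntegrable _ _)
    (by fun_prop : Continuous fun s => deriv g (y₀ - s) * h s).aestronglyMeasurable ?_
    intervalIntegrable_const ?_).2
  · exact .of_forall fun y =>
      (by fun_prop : Continuous fun s => g (y - s) * h s).aestronglyMeasurable
  · exact .of_forall fun s hs y hy => hC (y, s) ⟨hy, uIoc_subset_uIcc hs⟩
  · refine .of_forall fun s _ y _ => ?_
    have := (hg.differentiable one_ne_zero _).hasDerivAt.comp y ((hasDerivAt_id y).sub_const s)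
    simpa using this.mul_const (h s)

theorem hasStrictFDerivAt_integral_comp_sub_mul (hg : ContDiff ℝ 1 g) (hh : Continuous h)
    (a : ℝ) (z : ℝ × ℝ) :
    HasStrictFDerivAt (fun z : ℝ × ℝ => ∫ s in a..z.2, g (z.1 - s) * h s)
      ((ContinuousLinearMap.toSpanSingleton ℝ (∫ s in a..z.2, deriv g (z.1 - s) * h s)).coprod
        (ContinuousLinearMap.toSpanSingleton ℝ (g (z.1 - z.2) * h z.2))) z := by
  have hgc := hg.continuous
  have hg' : Continuous (deriv g) := hg.continuous_deriv le_rfl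
  have hspan := (ContinuousLinearMap.toSpanSingletonLIE ℝ ℝ).continuous
  refine hasStrictFDerivAt_uncurry_coprod (f := fun y t => ∫ s in a..t, g (y - s) * h s)
    (f₁ := fun y t => ContinuousLinearMap.toSpanSingleton ℝ (∫ s in a..t, deriv g (y - s) * h s))
    (f₂ := fun y t => ContinuousLinearMap.toSpanSingleton ℝ (g (y - t) * h t))
    (.of_forall fun v => (hasDerivAt_integral_comp_sub_mul hg hh a v.2 v.1).hasFDerivAt)
    (.of_forall fun v => ((Continuous.integral_hasStrictDerivAt
      (f := fun s => g (v.1 - s) * h s) (by fun_prop) a v.2).hasDerivAt).hasFDerivAt)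
    (hspan.comp (continuous_integral_comp_sub_mul hg' hh a)).continuousAt
    (hspan.comp (by fun_prop : Continuous fun z : ℝ × ℝ => g (z.1 - z.2) * h z.2)).continuousAt

theorem contDiff_integral_comp_sub_mul (hg : ContDiff ℝ 1 g) (hh : Continuous h) (a : ℝ) :
    ContDiff ℝ 1 fun z : ℝ × ℝ => ∫ s in a..z.2, g (z.1 - s) * h s := by
  have hgc := hg.continuous
  have hg' : Continuous (deriv g) := hg.continuous_deriv le_rfl
  have hspan := (ContinuousLinearMap.toSpanSingletonLIE ℝ ℝ).continuous
  refine contDiff_one_iff_hasFDerivAt.2 ⟨_, ?_, fun z =>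
    (hasStrictFDerivAt_integral_comp_sub_mul hg hh a z).hasFDerivAt⟩
  have h₁ : Continuous fun z : ℝ × ℝ =>
      ContinuousLinearMap.toSpanSingleton ℝ (∫ s in a..z.2, deriv g (z.1 - s) * h s) :=
    hspan.comp (continuous_integral_comp_sub_mul hg' hh a)
  have h₂ : Continuous fun z : ℝ × ℝ =>
      ContinuousLinearMap.toSpanSingleton ℝ (g (z.1 - z.2) * h z.2) :=
    hspan.comp (by fun_prop)
  fun_prop

end Convolution

/-- The Duhamel solution of `∂_τ w − ∂_x w = g(x) h(τ)`, `w(x, 0) = F(x)`. -/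
noncomputable def duhamel (F g h : ℝ → ℝ) (x τ : ℝ) : ℝ :=
  F (x + τ) + ∫ s in (0 : ℝ)..τ, g (x + τ - s) * h s

section Duhamel

variable {F g h : ℝ → ℝ}

@[simp]
theorem duhamel_zero_right (F g h : ℝ → ℝ) (x : ℝ) : duhamel F g h x 0 = F x := by
  simp [duhamel]

theorem duhamel_congr {F' g' h' : ℝ → ℝ} (hF : EqOn F F' (Ici 0)) (hg : EqOn g g' (Ici 0))
    (hh : EqOn h h' (Ici 0)) {x τ : ℝ} (hx : 0 ≤ x) (hτ : 0 ≤ τ) :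
    duhamel F g h x τ = duhamel F' g' h' x τ := by
  rw [duhamel, duhamel, hF (add_nonneg hx hτ : 0 ≤ x + τ)]
  congr 1
  refine intervalIntegral.integral_congr fun s hs => ?_
  rw [uIcc_of_le hτ] at hs
  simp only [hg (by linarith [hs.2] : 0 ≤ x + τ - s), hh hs.1]

theorem duhamel_nonneg (hF : ∀ x ∈ Ici 0, 0 ≤ F x) (hg : ∀ x ∈ Ici 0, 0 ≤ g x)
    (hh : ∀ x ∈ Ici 0, 0 ≤ h x) {x τ : ℝ} (hx : 0 ≤ x) (hτ : 0 ≤ τ) : 0 ≤ duhamel F g h x τ :=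
  add_nonneg (hF _ (add_nonneg hx hτ)) <| intervalIntegral.integral_nonneg hτ fun s hs =>
    mul_nonneg (hg _ (by linarith [hs.2] : 0 ≤ x + τ - s)) (hh s hs.1)

theorem contDiff_duhamel (hF : ContDiff ℝ 1 F) (hg : ContDiff ℝ 1 g) (hh : Continuous h) :
    ContDiff ℝ 1 fun z : ℝ × ℝ => duhamel F g h z.1 z.2 :=
  (hF.comp (contDiff_fst.add contDiff_snd)).add <|
    (contDiff_integral_comp_sub_mul hg hh 0).comp
      ((contDiff_fst.add contDiff_snd).prodMk contDiff_snd)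

theorem hasDerivAt_duhamel_space (hF : ContDiff ℝ 1 F) (hg : ContDiff ℝ 1 g) (hh : Continuous h)
    (x τ : ℝ) :
    HasDerivAt (fun y => duhamel F g h y τ)
      (deriv F (x + τ) + ∫ s in (0 : ℝ)..τ, deriv g (x + τ - s) * h s) x :=
  ((hF.differentiable one_ne_zero _).hasDerivAt.comp_add_const x τ).add
    ((hasDerivAt_integral_comp_sub_mul hg hh 0 τ (x + τ)).comp_add_const x τ)

theorem hasDerivAt_duhamel_time (hF : ContDiff ℝ 1 F) (hg : ContDiff ℝ 1 g) (hh : Continuous h)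
    (x τ : ℝ) :
    HasDerivAt (fun t => duhamel F g h x t)
      (deriv F (x + τ) + ((∫ s in (0 : ℝ)..τ, deriv g (x + τ - s) * h s) + g x * h τ)) τ := by
  have hJ := (hasStrictFDerivAt_integral_comp_sub_mul hg hh 0 (x + τ, τ)).hasFDerivAt
    |>.comp_hasDerivAt (f := fun t => (x + t, t)) τ (((hasDerivAt_id' τ).const_add x).prodMk (hasDerivAt_id' τ))
  simp only [Function.comp_def, ContinuousLinearMap.coprod_apply,
    ContinuousLinearMap.toSpanSingleton_apply, add_sub_cancel_right, smul_eq_mul, one_mul] at hJ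
  exact ((hF.differentiable one_ne_zero _).hasDerivAt.comp_const_add x τ).add hJ

end Duhamel

section Renewal

variable {p u0 : ℝ → ℝ}

theorem continuous_renewalTerm (hp : Continuous p) (hu0 : Continuous u0) (i : ℕ) :
    Continuous (renewalTerm p u0 i) := by
  induction i with
  | zero => exact hu0
  | succ i ih =>
    exact intervalIntegral.continuous_parametric_intervalIntegral_of_continuous
      (f := fun τ s => p (τ - s) * renewalTerm p u0 i s) (by fun_prop) continuous_id

theorem abs_renewalTerm_le {T M B : ℝ} (hpM : ∀ x ∈ Icc 0 T, |p x| ≤ M)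
    (hu0B : ∀ x ∈ Icc 0 T, |u0 x| ≤ B) (i : ℕ) :
    ∀ τ ∈ Icc 0 T, |renewalTerm p u0 i τ| ≤ B * (M * τ) ^ i / i.factorial := by
  induction i with
  | zero => intro τ hτ; simpa [renewalTerm] using hu0B τ hτ
  | succ i ih =>
    intro τ hτ
    have hM : 0 ≤ M := (abs_nonneg _).trans (hpM 0 ⟨le_rfl, hτ.1.trans hτ.2⟩)
    have hbound : ∀ s ∈ Ioc 0 τ,
        ‖p (τ - s) * renewalTerm p u0 i s‖ ≤ M * (B * (M * s) ^ i / i.factorial) := by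
      intro s hs
      rw [norm_mul]
      exact mul_le_mul (hpM _ ⟨by linarith [hs.2], by linarith [hs.1, hτ.2]⟩)
        (ih s ⟨hs.1.le, hs.2.trans hτ.2⟩) (norm_nonneg _) hM
    calc |renewalTerm p u0 (i + 1) τ|
        ≤ ∫ s in (0 : ℝ)..τ, M * (B * (M * s) ^ i / i.factorial) :=
          intervalIntegral.norm_integral_le_of_norm_le hτ.1 (.of_forall hbound)
            ((by fun_prop : Continuous fun s : ℝ => M * (B * (M * s) ^ i / i.factorial))
              |>.intervalIntegrable _ _)
      _ = B * (M * τ) ^ (i + 1) / (i + 1).factorial := by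
          simp only [mul_pow, mul_div_assoc, intervalIntegral.integral_const_mul,
            intervalIntegral.integral_div, integral_pow]
          push_cast [Nat.factorial_succ]
          field_simp
          ring

theorem exists_summable_bound_renewalTerm (hp : Continuous p) (hu0 : Continuous u0) (T : ℝ) :
    ∃ c : ℕ → ℝ, Summable c ∧ ∀ i, ∀ τ ∈ Icc 0 T, ‖renewalTerm p u0 i τ‖ ≤ c i := by
  obtain ⟨M, hM⟩ := isCompact_Icc.exists_bound_of_continuousOn (s := Icc 0 T) hp.continuousOn
  obtain ⟨B, hB⟩ := isCompact_Icc.exists_bound_of_continuousOn (s := Icc 0 T) hu0.continuousOn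
  refine ⟨fun i => B * ((|M| * T) ^ i / i.factorial),
    (Real.summable_pow_div_factorial _).mul_left B, fun i τ hτ => ?_⟩
  have hB0 : 0 ≤ B := (norm_nonneg _).trans (hB τ hτ)
  calc ‖renewalTerm p u0 i τ‖ ≤ B * (|M| * τ) ^ i / i.factorial :=
        abs_renewalTerm_le (fun x hx => (hM x hx).trans (le_abs_self M)) hB i τ hτ
    _ ≤ B * ((|M| * T) ^ i / i.factorial) := by
        rw [mul_div_assoc]
        gcongr
        exacts [mul_nonneg (abs_nonneg M) hτ.1, hτ.2]

theorem summable_renewalTerm (hp : Continuous p) (hu0 : Continuous u0) {τ : ℝ} (hτ : 0 ≤ τ) :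
    Summable fun i => renewalTerm p u0 i τ := by
  obtain ⟨c, hc, hbound⟩ := exists_summable_bound_renewalTerm hp hu0 τ
  exact hc.of_norm_bounded fun i => hbound i τ ⟨hτ, le_rfl⟩

theorem continuousOn_renewalDensity (hp : Continuous p) (hu0 : Continuous u0) :
    ContinuousOn (renewalDensity p u0) (Ici 0) := by
  intro τ hτ
  obtain ⟨c, hc, hbound⟩ := exists_summable_bound_renewalTerm hp hu0 (τ + 1)
  have hcont : ContinuousOn (renewalDensity p u0) (Icc 0 (τ + 1)) :=
    continuousOn_tsum (fun i => (continuous_renewalTerm hp hu0 i).continuousOn) hc hbound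
  refine (hcont τ ⟨hτ, by linarith⟩).mono_of_mem_nhdsWithin ?_
  rw [← Ici_inter_Iic]
  exact inter_mem_nhdsWithin _ (Iic_mem_nhds (by linarith))

theorem renewalDensity_eq_add_integral (hp : Continuous p) (hu0 : Continuous u0) {τ : ℝ}
    (hτ : 0 ≤ τ) :
    renewalDensity p u0 τ = u0 τ + ∫ s in (0 : ℝ)..τ, p (τ - s) * renewalDensity p u0 s := by
  obtain ⟨c, hc, hbound⟩ := exists_summable_bound_renewalTerm hp hu0 τ
  have hs (s) (hs : s ∈ uIoc 0 τ) : s ∈ Icc 0 τ := by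
    rw [uIoc_of_le hτ] at hs; exact Ioc_subset_Icc_self hs
  have hsum : HasSum (fun i => renewalTerm p u0 (i + 1) τ)
      (∫ s in (0 : ℝ)..τ, p (τ - s) * renewalDensity p u0 s) := by
    refine intervalIntegral.hasSum_integral_of_dominated_convergence
      (fun i s => ‖p (τ - s)‖ * c i)
      (fun i => ((hp.comp (continuous_const.sub continuous_id)).mul
        (continuous_renewalTerm hp hu0 i)).aestronglyMeasurable)
      (fun i => .of_forall fun s hs' => ?_) (.of_forall fun s _ => hc.mul_left _) ?_
      (.of_forall fun s hs' => ((summable_renewalTerm hp hu0 (hs s hs').1).hasSum).mul_left _)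
    · rw [norm_mul]; exact mul_le_mul_of_nonneg_left (hbound i s (hs s hs')) (norm_nonneg _)
    · simp_rw [tsum_mul_left]
      exact (by fun_prop : Continuous _).intervalIntegrable _ _
  rw [renewalDensity, (summable_renewalTerm hp hu0 hτ).tsum_eq_zero_add, hsum.tsum_eq]
  rfl

theorem renewalTerm_nonneg (hp : ∀ x ∈ Ici 0, 0 ≤ p x) (hu0 : ∀ x ∈ Ici 0, 0 ≤ u0 x) (i : ℕ) :
    ∀ τ ∈ Ici 0, 0 ≤ renewalTerm p u0 i τ := by
  induction i with
  | zero => exact hu0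
  | succ i ih =>
    exact fun _ hτ => intervalIntegral.integral_nonneg hτ fun s hs =>
      mul_nonneg (hp _ (sub_nonneg.2 hs.2)) (ih s hs.1)

theorem renewalDensity_nonneg (hp : ∀ x ∈ Ici 0, 0 ≤ p x) (hu0 : ∀ x ∈ Ici 0, 0 ≤ u0 x)
    {τ : ℝ} (hτ : τ ∈ Ici 0) : 0 ≤ renewalDensity p u0 τ :=
  tsum_nonneg fun i => renewalTerm_nonneg hp hu0 i τ hτ

theorem renewalTerm_congr {q v0 : ℝ → ℝ} (hpq : EqOn p q (Ici 0)) (hu0v0 : EqOn u0 v0 (Ici 0))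
    (i : ℕ) : EqOn (renewalTerm p u0 i) (renewalTerm q v0 i) (Ici 0) := by
  induction i with
  | zero => exact hu0v0
  | succ i ih =>
    intro _ hτ
    refine intervalIntegral.integral_congr fun s hs => ?_
    rw [uIcc_of_le hτ] at hs
    simp only [hpq (sub_nonneg.2 hs.2), ih hs.1]

theorem renewalDensity_congr {q v0 : ℝ → ℝ} (hpq : EqOn p q (Ici 0))
    (hu0v0 : EqOn u0 v0 (Ici 0)) : EqOn (renewalDensity p u0) (renewalDensity q v0) (Ici 0) :=
  fun _ hτ => tsum_congr fun i => renewalTerm_congr hpq hu0v0 i hτ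

end Renewal

theorem stmt0_general (p u0 : ℝ → ℝ) (hp : MemC p)
    (hu0 : MemC u0) (u : ℝ → ℝ → ℝ)
    (hu : ∀ x τ : ℝ, u x τ =
      u0 (x + τ) + ∫ s in (0 : ℝ)..τ, p (x + τ - s) * renewalDensity p u0 s) :
    IsStrongSolution p u ∧ ∀ x : ℝ, u x 0 = u0 x := by
  obtain rfl : u = duhamel u0 p (renewalDensity p u0) := funext fun x => funext (hu x)
  obtain ⟨g, hg, hgp⟩ := hp.1.exists_contDiff_eqOn_Ici
  obtain ⟨F, hF, hFu⟩ := hu0.1.exists_contDiff_eqOn_Ici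
  set α : ℝ → ℝ := fun s => renewalDensity g F (max s 0)
  have hα : Continuous α :=
    (continuousOn_renewalDensity hg.continuous hF.continuous).comp_continuous (by fun_prop)
      fun s => le_max_right s 0
  have hαg : EqOn α (renewalDensity g F) (Ici 0) := fun s hs => by
    simp [α, max_eq_left (show 0 ≤ s from hs)]
  have huw {x τ : ℝ} (hx : 0 ≤ x) (hτ : 0 ≤ τ) :
      duhamel u0 p (renewalDensity p u0) x τ = duhamel F g α x τ :=
    duhamel_congr hFu.symm hgp.symm (hαg.trans (renewalDensity_congr hgp hFu)).symm hx hτ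
  have hα_renewal {τ : ℝ} (hτ : 0 ≤ τ) : duhamel F g α 0 τ = α τ := by
    rw [duhamel_congr (eqOn_refl F _) (eqOn_refl g _) hαg le_rfl hτ, hαg hτ,
      renewalDensity_eq_add_integral hg.continuous hF.continuous hτ, duhamel]
    simp only [zero_add]
  refine ⟨⟨(contDiff_duhamel hF hg hα).contDiffOn.congr fun z hz => huw hz.1 hz.2,
    fun x hx τ hτ => duhamel_nonneg hu0.nonneg hp.nonneg
      (fun s => renewalDensity_nonneg hp.nonneg hu0.nonneg) hx hτ,
    by simpa only [duhamel_zero_right] using hu0, fun x hx τ hτ => ?_⟩, duhamel_zero_right _ _ _⟩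
  rw [(hasDerivAt_duhamel_time hF hg hα x τ).derivWithin_Ici_of_eqOn (fun t ht => huw hx ht) hτ,
    (hasDerivAt_duhamel_space hF hg hα x τ).derivWithin_Ici_of_eqOn (fun y hy => huw hy hτ) hx,
    huw le_rfl hτ, hα_renewal hτ, ← hgp hx]
  ring

/-- For continuous `p ∈ 𝒞` and `u0 ∈ 𝒞`, the function
`u(x,τ) = u0(x+τ) + ∫_0^τ p(x+τ−s) α(s) ds` is a strong solution of the
Kolmogorov forward equation with initial data `u0`. -/
theorem stmt0 (p u0 : ℝ → ℝ) (hp : MemC p) (hpc : ContinuousOn p (Set.Ici 0))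
    (hu0 : MemC u0) (u : ℝ → ℝ → ℝ)
    (hu : ∀ x τ : ℝ, u x τ =
      u0 (x + τ) + ∫ s in (0 : ℝ)..τ, p (x + τ - s) * renewalDensity p u0 s) :
    IsStrongSolution p u ∧ ∀ x : ℝ, u x 0 = u0 x :=
  stmt0_general p u0 hp hu0 u hu
end

section
/- Let p ∈ C be continuous. If u and v are both strong solutions of the Kolmogorov forward equation for residual times with holding time density p and with the same initial data u(·,0) = v(·,0) = u0 ∈ C, then u(x,τ) = v(x,τ) for all x, τ ≥ 0. -/
open MeasureTheory Set Filter Topology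

/-!
The difference `w = u - v` solves the transport equation `∂_τ w - ∂_x w = p(x) a(τ)` with
`a(τ) = w(0,τ)` and zero initial data. Integrating along the characteristics `x + τ = const`
gives `w(x,τ) = ∫_0^τ p(x + τ - t) a(t) dt`; at `x = 0` this is a homogeneous Volterra equation
for `a`, which forces `a = 0` by Grönwall's inequality, and then `w = 0`.
-/

lemma intervalIntegrable_comp_sub_mul {k f : ℝ → ℝ} (hk : ContinuousOn k (Ici 0))
    (hf : ContinuousOn f (Ici 0)) {c s : ℝ} (hs : 0 ≤ s) (hsc : s ≤ c) :
    IntervalIntegrable (fun t => k (c - t) * f t) volume 0 s := by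
  refine ContinuousOn.intervalIntegrable ?_
  rw [uIcc_of_le hs]
  refine ContinuousOn.mul (hk.comp (by fun_prop) fun t ht => ?_) (hf.mono Icc_subset_Ici_self)
  simp only [mem_Ici, sub_nonneg]
  linarith [ht.2]

lemma eqOn_zero_of_le_mul_integral {b : ℝ → ℝ} {M T : ℝ} (hb : Continuous b)
    (hb_nonneg : ∀ t ∈ Icc 0 T, 0 ≤ b t)
    (hbM : ∀ t ∈ Icc 0 T, b t ≤ M * ∫ r in (0 : ℝ)..t, b r) :
    EqOn b 0 (Icc 0 T) := by
  set B : ℝ → ℝ := fun t => ∫ r in (0 : ℝ)..t, b r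
  have hB' : ∀ t, HasDerivAt B (b t) t := fun t => hb.integral_hasStrictDerivAt 0 t |>.hasDerivAt
  have hB_nonneg : ∀ t ∈ Icc 0 T, 0 ≤ B t := fun t ht =>
    intervalIntegral.integral_nonneg ht.1 fun r hr => hb_nonneg r ⟨hr.1, hr.2.trans ht.2⟩
  have hB_zero : ∀ t ∈ Icc 0 T, B t = 0 :=
    eq_zero_of_abs_deriv_le_mul_abs_self_of_eq_zero_right
      (fun t _ => (hB' t).continuousAt.continuousWithinAt) (fun t _ => (hB' t).hasDerivWithinAt)
      intervalIntegral.integral_same fun t ht => by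
        have ht' : t ∈ Icc 0 T := Ico_subset_Icc_self ht
        rw [Real.norm_eq_abs, Real.norm_eq_abs, abs_of_nonneg (hb_nonneg t ht'),
          abs_of_nonneg (hB_nonneg t ht')]
        exact hbM t ht'
  intro t ht
  have := hbM t ht
  rw [show (∫ r in (0 : ℝ)..t, b r) = 0 from hB_zero t ht, mul_zero] at this
  exact le_antisymm this (hb_nonneg t ht)

theorem eqOn_zero_of_eq_integral_comp_sub_mul {k a : ℝ → ℝ} (hk : ContinuousOn k (Ici 0))
    (ha : ContinuousOn a (Ici 0)) (h : ∀ s, 0 ≤ s → a s = ∫ t in (0 : ℝ)..s, k (s - t) * a t) :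
    EqOn a 0 (Ici 0) := by
  intro T hT
  obtain ⟨M, hM⟩ := isCompact_Icc.exists_bound_of_continuousOn
    (hk.mono Icc_subset_Ici_self : ContinuousOn k (Icc 0 T))
  -- extend `|a|` continuously to all of `ℝ` so that its primitive is differentiable everywhere
  set b : ℝ → ℝ := fun t => |a (max t 0)|
  have hb : Continuous b :=
    (ha.comp_continuous (by fun_prop) fun t => le_max_right t 0).abs
  have hb_eq : ∀ t, 0 ≤ t → b t = |a t| := fun t ht => by simp only [b, max_eq_left ht]
  have hbM : ∀ t ∈ Icc 0 T, b t ≤ M * ∫ r in (0 : ℝ)..t, b r := by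
    intro t ht
    rw [hb_eq t ht.1, h t ht.1, ← intervalIntegral.integral_const_mul]
    refine (intervalIntegral.abs_integral_le_integral_abs ht.1).trans <|
      intervalIntegral.integral_mono_on ht.1
        (intervalIntegrable_comp_sub_mul hk ha ht.1 le_rfl).abs
        ((hb.const_smul M).intervalIntegrable 0 t) fun r hr => ?_
    rw [hb_eq r hr.1, abs_mul]
    refine mul_le_mul_of_nonneg_right ?_ (abs_nonneg _)
    simpa using hM (t - r) ⟨by linarith [hr.2], by linarith [hr.1, ht.2]⟩
  have := eqOn_zero_of_le_mul_integral hb (fun t _ => abs_nonneg _) hbM ⟨hT, le_rfl⟩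
  rw [hb_eq T hT] at this
  exact abs_eq_zero.mp this

namespace IsStrongSolution

variable {p : ℝ → ℝ} {u : ℝ → ℝ → ℝ}

lemma continuousOn_right (hu : IsStrongSolution p u) {x : ℝ} (hx : 0 ≤ x) :
    ContinuousOn (u x) (Ici 0) :=
  hu.1.continuousOn.comp (f := fun t => (x, t)) (by fun_prop) fun _ ht => ⟨hx, ht⟩

lemma hasDerivAt_characteristic (hu : IsStrongSolution p u) {c τ : ℝ} (hx : 0 < c - τ)
    (hτ : 0 < τ) : HasDerivAt (fun t => u (c - t) t) (p (c - τ) * u 0 τ) τ := by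
  set F : ℝ × ℝ → ℝ := fun z => u z.1 z.2
  set F' := fderiv ℝ F (c - τ, τ)
  have hF : HasFDerivAt F F' (c - τ, τ) :=
    ((hu.1.contDiffAt (prod_mem_nhds (Ici_mem_nhds hx) (Ici_mem_nhds hτ))).differentiableAt
      one_ne_zero).hasFDerivAt
  have h_τ : HasDerivAt (fun t => u (c - τ) t) (F' (0, 1)) τ :=
    hF.comp_hasDerivAt_of_eq τ (f := fun t => (c - τ, t))
      ((hasDerivAt_const τ (c - τ)).prodMk (hasDerivAt_id τ)) rfl
  have h_x : HasDerivAt (fun y => u y τ) (F' (1, 0)) (c - τ) :=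
    hF.comp_hasDerivAt_of_eq (c - τ) (f := fun y => (y, τ))
      ((hasDerivAt_id (c - τ)).prodMk (hasDerivAt_const (c - τ) τ)) rfl
  have h_char : HasDerivAt (fun t => u (c - t) t) (F' (-1, 1)) τ :=
    hF.comp_hasDerivAt_of_eq τ (f := fun t => (c - t, t))
      (((hasDerivAt_id τ).const_sub c).prodMk (hasDerivAt_id τ)) rfl
  have hpde := hu.2.2.2 (c - τ) hx.le τ hτ.le
  rw [derivWithin_of_mem_nhds (Ici_mem_nhds hτ), derivWithin_of_mem_nhds (Ici_mem_nhds hx),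
    h_τ.deriv, h_x.deriv, ← map_sub] at hpde
  rw [← hpde]
  convert h_char using 2
  simp

theorem eq_add_integral (hu : IsStrongSolution p u) (hp : ContinuousOn p (Ici 0)) {y s : ℝ}
    (hy : 0 ≤ y) (hs : 0 ≤ s) :
    u y s = u (y + s) 0 + ∫ t in (0 : ℝ)..s, p (y + s - t) * u 0 t := by
  have hg : ContinuousOn (fun t => u (y + s - t) t) (Icc 0 s) :=
    hu.1.continuousOn.comp (f := fun t => (y + s - t, t)) (by fun_prop) fun t ht =>
      ⟨show 0 ≤ y + s - t by linarith [ht.2], ht.1⟩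
  have hg' : ∀ t ∈ Ioo 0 s,
      HasDerivWithinAt (fun t => u (y + s - t) t) (p (y + s - t) * u 0 t) (Ioi t) t :=
    fun t ht => (hu.hasDerivAt_characteristic (by linarith [ht.2]) ht.1).hasDerivWithinAt
  rw [intervalIntegral.integral_eq_sub_of_hasDeriv_right_of_le hs hg hg'
    (intervalIntegrable_comp_sub_mul hp (hu.continuousOn_right le_rfl) hs (by linarith))]
  simp

end IsStrongSolution

theorem stmt1_general (p u0 : ℝ → ℝ) (hpc : ContinuousOn p (Set.Ici 0))
    (u v : ℝ → ℝ → ℝ)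
    (hu : IsStrongSolution p u) (hv : IsStrongSolution p v)
    (hu0eq : ∀ x : ℝ, u x 0 = u0 x) (hv0eq : ∀ x : ℝ, v x 0 = u0 x) :
    ∀ x ∈ Set.Ici (0 : ℝ), ∀ τ ∈ Set.Ici (0 : ℝ), u x τ = v x τ := by
  set a : ℝ → ℝ := fun t => u 0 t - v 0 t
  have ha : ContinuousOn a (Ici 0) :=
    (hu.continuousOn_right le_rfl).sub (hv.continuousOn_right le_rfl)
  have hdiff : ∀ y, 0 ≤ y → ∀ s, 0 ≤ s →
      u y s - v y s = ∫ t in (0 : ℝ)..s, p (y + s - t) * a t := by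
    intro y hy s hs
    have hys : s ≤ y + s := by linarith
    rw [hu.eq_add_integral hpc hy hs, hv.eq_add_integral hpc hy hs, hu0eq, hv0eq,
      add_sub_add_left_eq_sub, ← intervalIntegral.integral_sub
        (intervalIntegrable_comp_sub_mul hpc (hu.continuousOn_right le_rfl) hs hys)
        (intervalIntegrable_comp_sub_mul hpc (hv.continuousOn_right le_rfl) hs hys)]
    simp only [a, mul_sub]
  have ha_zero : EqOn a 0 (Ici 0) :=
    eqOn_zero_of_eq_integral_comp_sub_mul hpc ha fun s hs => by
      simpa using hdiff 0 le_rfl s hs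
  intro x hx τ hτ
  have hw := hdiff x hx τ hτ
  rw [intervalIntegral.integral_congr (g := fun _ => 0) fun t ht => by
    rw [uIcc_of_le hτ] at ht
    simp [ha_zero ht.1], intervalIntegral.integral_zero] at hw
  exact sub_eq_zero.mp hw

/-- Uniqueness of strong solutions: if `u` and `v` are strong
solutions for the same continuous holding time density `p ∈ 𝒞` and the same
initial data `u0 ∈ 𝒞`, then `u = v` on `ℝ₊ × ℝ₊`. -/
theorem stmt1 (p u0 : ℝ → ℝ) (hp : MemC p) (hpc : ContinuousOn p (Set.Ici 0))
    (hu0 : MemC u0) (u v : ℝ → ℝ → ℝ)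
    (hu : IsStrongSolution p u) (hv : IsStrongSolution p v)
    (hu0eq : ∀ x : ℝ, u x 0 = u0 x) (hv0eq : ∀ x : ℝ, v x 0 = u0 x) :
    ∀ x ∈ Set.Ici (0 : ℝ), ∀ τ ∈ Set.Ici (0 : ℝ), u x τ = v x τ :=
  stmt1_general p u0 hpc u v hu hv hu0eq hv0eq
end
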